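/- arXiv:1409.1136 — 2 statements merged into one kernel-verified Lean document; each statement's English description precedes it below -/
import Mathlib

section
/- The class of data languages recognized by weak class memory automata is closed under intersection. -/
/-- A class memory automaton over alphabet `S` and data set `D`, with state set `Q`. -/
structure CMA (Q S D : Type) where
  init : Q
  δ : Q → S → Option Q → Set Q
  FL : Set Q
  FG : Set Q
  sub : FG ⊆ FL

namespace CMA

variable {Q S D : Type} [DecidableEq D]

/-- One transition step: on input `(a,d)`, from `(q,f)` move to `(q', f[d ↦ q'])`
whenever `q' ∈ δ(q, a, f d)`. -/
def Step (A : CMA Q S D) (c : Q × (D → Option Q)) (x : S × D) (c' : Q × (D → Option Q)) : Prop :=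
  c'.1 ∈ A.δ c.1 x.1 (c.2 x.2) ∧ c'.2 = Function.update c.2 x.2 (some c'.1)

/-- A run on a data word, from a configuration to a configuration. -/
inductive Run (A : CMA Q S D) : (Q × (D → Option Q)) → List (S × D) → (Q × (D → Option Q)) → Prop
  | nil (c) : Run A c [] c
  | cons {c x c' w c''} : A.Step c x c' → Run A c' w c'' → Run A c (x :: w) c''

def initConfig (A : CMA Q S D) : Q × (D → Option Q) := (A.init, fun _ => none)

/-- Acceptance: some run from the initial configuration ends in a globally accepting
state with every remembered data value in a locally accepting state. -/
def Accepts (A : CMA Q S D) (w : List (S × D)) : Prop :=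
  ∃ q f, A.Run A.initConfig w (q, f) ∧ q ∈ A.FG ∧ ∀ d s, f d = some s → s ∈ A.FL

def Lang (A : CMA Q S D) : Set (List (S × D)) := {w | A.Accepts w}

/-- A CMA is weak if every state is locally accepting. -/
def Weak (A : CMA Q S D) : Prop := A.FL = Set.univ

/-- A CMA is deterministic if every value of the transition map is a singleton. -/
def Deterministic (A : CMA Q S D) : Prop := ∀ q a s, ∃ q', A.δ q a s = {q'}

end CMA

/-!
Run the two weak automata in lockstep on the product state space, each data value remembering
the pair of states the two components last left it in. A product run projects onto runs of
both components, and conversely two runs on the same word pair up, because after reading `w`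
both memories are defined exactly on the data values occurring in `w`. Weakness makes the
local acceptance condition vacuous, so only the global one, a product condition, remains.
-/

theorem Option.map_fst_map₂_mk_of_isSome_iff {α β : Type*} {a : Option α} {b : Option β}
    (h : a.isSome ↔ b.isSome) : (Option.map₂ Prod.mk a b).map Prod.fst = a := by
  cases a <;> cases b <;> simp_all

theorem Option.map_snd_map₂_mk_of_isSome_iff {α β : Type*} {a : Option α} {b : Option β}
    (h : a.isSome ↔ b.isSome) : (Option.map₂ Prod.mk a b).map Prod.snd = b := by
  cases a <;> cases b <;> simp_all

namespace CMA

variable {Q Q' Q₁ Q₂ S D : Type}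

def mapConfig (π : Q → Q') (c : Q × (D → Option Q)) : Q' × (D → Option Q') :=
  (π c.1, fun d => (c.2 d).map π)

def relabel (e : Q ≃ Q') (A : CMA Q S D) : CMA Q' S D where
  init := e A.init
  δ q a s := e.symm ⁻¹' A.δ (e.symm q) a (s.map e.symm)
  FL := e.symm ⁻¹' A.FL
  FG := e.symm ⁻¹' A.FG
  sub := Set.preimage_mono A.sub

theorem Weak.relabel {A : CMA Q S D} (hA : A.Weak) (e : Q ≃ Q') : (A.relabel e).Weak := by
  change e.symm ⁻¹' A.FL = Set.univ
  rw [hA, Set.preimage_univ]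

def prod (A₁ : CMA Q₁ S D) (A₂ : CMA Q₂ S D) : CMA (Q₁ × Q₂) S D where
  init := (A₁.init, A₂.init)
  δ q a s := {q' | q'.1 ∈ A₁.δ q.1 a (s.map Prod.fst) ∧ q'.2 ∈ A₂.δ q.2 a (s.map Prod.snd)}
  FL := Set.univ
  FG := A₁.FG ×ˢ A₂.FG
  sub := Set.subset_univ _

theorem prod_weak (A₁ : CMA Q₁ S D) (A₂ : CMA Q₂ S D) : (A₁.prod A₂).Weak := rfl

def pairConfig (c₁ : Q₁ × (D → Option Q₁)) (c₂ : Q₂ × (D → Option Q₂)) :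
    (Q₁ × Q₂) × (D → Option (Q₁ × Q₂)) :=
  ((c₁.1, c₂.1), fun d => Option.map₂ Prod.mk (c₁.2 d) (c₂.2 d))

variable [DecidableEq D]

section Simulation

variable {A : CMA Q S D} {B : CMA Q' S D} (π : Q → Q')
  (hδ : ∀ q a s q', q' ∈ A.δ q a s → π q' ∈ B.δ (π q) a (s.map π))
include hδ

theorem Step.map {c c' : Q × (D → Option Q)} {x : S × D} (h : A.Step c x c') :
    B.Step (mapConfig π c) x (mapConfig π c') := by
  refine ⟨hδ _ _ _ _ h.1, funext fun d => ?_⟩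
  simp only [mapConfig, h.2]
  exact Function.apply_update (fun _ => Option.map π) c.2 x.2 (some c'.1) d

theorem Run.map {c c' : Q × (D → Option Q)} {w : List (S × D)} (h : A.Run c w c') :
    B.Run (mapConfig π c) w (mapConfig π c') := by
  induction h with
  | nil c => exact .nil _
  | cons hstep _ ih => exact .cons (hstep.map π hδ) ih

end Simulation

theorem lang_relabel (e : Q ≃ Q') (A : CMA Q S D) : (A.relabel e).Lang = A.Lang := by
  ext w
  constructor
  · rintro ⟨q, f, hrun, hFG, hFL⟩
    have hrun' := hrun.map (B := A) e.symm (fun _ _ _ _ h => h)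
    refine ⟨e.symm q, fun d => (f d).map e.symm, ?_, hFG, ?_⟩
    · simpa [mapConfig, initConfig, CMA.relabel] using hrun'
    · rintro d s hs
      obtain ⟨q', hq', rfl⟩ := Option.map_eq_some_iff.mp hs
      exact hFL d q' hq'
  · rintro ⟨q, f, hrun, hFG, hFL⟩
    refine ⟨e q, fun d => (f d).map e, ?_, by simpa [CMA.relabel] using hFG, ?_⟩
    · exact hrun.map (B := A.relabel e) e (fun _ _ _ _ h => by simpa [CMA.relabel] using h)
    · rintro d s hs
      obtain ⟨q', hq', rfl⟩ := Option.map_eq_some_iff.mp hs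
      simpa [CMA.relabel] using hFL d q' hq'

theorem Weak.mem_lang_iff {A : CMA Q S D} (hA : A.Weak) {w : List (S × D)} :
    w ∈ A.Lang ↔ ∃ q f, A.Run A.initConfig w (q, f) ∧ q ∈ A.FG := by
  simp only [Weak] at hA
  simp only [Lang, Accepts, Set.mem_ofPred_eq, hA, Set.mem_univ, implies_true, and_true]

theorem Step.isSome_iff {A : CMA Q S D} {c c' : Q × (D → Option Q)} {x : S × D}
    (h : A.Step c x c') (d : D) : (c'.2 d).isSome ↔ d = x.2 ∨ (c.2 d).isSome := by
  rw [h.2]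
  by_cases hd : d = x.2 <;> simp [hd]

theorem Step.pair {A₁ : CMA Q₁ S D} {A₂ : CMA Q₂ S D} {x : S × D}
    {c₁ c₁' : Q₁ × (D → Option Q₁)} {c₂ c₂' : Q₂ × (D → Option Q₂)}
    (h₁ : A₁.Step c₁ x c₁') (h₂ : A₂.Step c₂ x c₂')
    (hsupp : ∀ d, (c₁.2 d).isSome ↔ (c₂.2 d).isSome) :
    (A₁.prod A₂).Step (pairConfig c₁ c₂) x (pairConfig c₁' c₂') := by
  refine ⟨⟨?_, ?_⟩, funext fun d => ?_⟩
  · simpa [pairConfig, Option.map_fst_map₂_mk_of_isSome_iff (hsupp x.2)] using h₁.1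
  · simpa [pairConfig, Option.map_snd_map₂_mk_of_isSome_iff (hsupp x.2)] using h₂.1
  · by_cases hd : d = x.2 <;> simp [pairConfig, h₁.2, h₂.2, hd]

theorem Run.pair {A₁ : CMA Q₁ S D} {A₂ : CMA Q₂ S D} {w : List (S × D)}
    {c₁ c₁' : Q₁ × (D → Option Q₁)} {c₂ c₂' : Q₂ × (D → Option Q₂)}
    (h₁ : A₁.Run c₁ w c₁') (h₂ : A₂.Run c₂ w c₂')
    (hsupp : ∀ d, (c₁.2 d).isSome ↔ (c₂.2 d).isSome) :
    (A₁.prod A₂).Run (pairConfig c₁ c₂) w (pairConfig c₁' c₂') := by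
  induction h₁ generalizing c₂ with
  | nil c => cases h₂; exact .nil _
  | cons hstep₁ _ ih =>
    rcases h₂ with _ | ⟨hstep₂, h₂⟩
    refine .cons (hstep₁.pair hstep₂ hsupp) (ih h₂ fun d => ?_)
    rw [hstep₁.isSome_iff, hstep₂.isSome_iff, hsupp]

theorem lang_prod {A₁ : CMA Q₁ S D} {A₂ : CMA Q₂ S D} (h₁ : A₁.Weak) (h₂ : A₂.Weak) :
    (A₁.prod A₂).Lang = A₁.Lang ∩ A₂.Lang := by
  ext w
  simp only [Set.mem_inter_iff, (prod_weak A₁ A₂).mem_lang_iff, h₁.mem_lang_iff, h₂.mem_lang_iff]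
  constructor
  · rintro ⟨q, f, hrun, hFG₁, hFG₂⟩
    exact ⟨⟨q.1, _, hrun.map (A := A₁.prod A₂) (B := A₁) Prod.fst (fun _ _ _ _ h => h.1), hFG₁⟩,
      ⟨q.2, _, hrun.map (A := A₁.prod A₂) (B := A₂) Prod.snd (fun _ _ _ _ h => h.2), hFG₂⟩⟩
  · rintro ⟨⟨q₁, f₁, hrun₁, hFG₁⟩, ⟨q₂, f₂, hrun₂, hFG₂⟩⟩
    exact ⟨(q₁, q₂), _, hrun₁.pair hrun₂ (fun _ => Iff.rfl), hFG₁, hFG₂⟩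

end CMA

theorem wcma_inter_general (S D : Type) [DecidableEq D]
    (n m : ℕ) (A₁ : CMA (Fin n) S D) (A₂ : CMA (Fin m) S D)
    (h₁ : A₁.Weak) (h₂ : A₂.Weak) :
    ∃ (k : ℕ) (B : CMA (Fin k) S D), B.Weak ∧ B.Lang = A₁.Lang ∩ A₂.Lang :=
  ⟨n * m, (A₁.prod A₂).relabel finProdFinEquiv, (CMA.prod_weak A₁ A₂).relabel _,
    by rw [CMA.lang_relabel, CMA.lang_prod h₁ h₂]⟩

/-- The class of data languages recognized by weak class memory automata
is closed under intersection. -/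
theorem wcma_inter (S D : Type) [DecidableEq D] [Finite S] [Infinite D]
    (n m : ℕ) (A₁ : CMA (Fin n) S D) (A₂ : CMA (Fin m) S D)
    (h₁ : A₁.Weak) (h₂ : A₂.Weak) :
    ∃ (k : ℕ) (B : CMA (Fin k) S D), B.Weak ∧ B.Lang = A₁.Lang ∩ A₂.Lang :=
  wcma_inter_general S D n m A₁ A₂ h₁ h₂
end

section
/- Every data language recognized by a weak class memory automaton with state set [m] is recognized by a non-reset history register automaton of type m, where place i stores the data values last seen in state i. -/
/-- A non-reset history register automaton of type `m` with state set `Q` over alphabet `S`. -/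
structure NRHRA (Q S : Type) (m : ℕ) where
  δ : Set (Q × S × (Set (Fin m) × Set (Fin m)) × Q)
  init : Q
  F : Set Q

namespace NRHRA

variable {Q S D : Type} {m : ℕ}

/-- One step on input `(a,d)`: there is `X ⊆ [m]` with `(q, a, (H⁻¹(d), X), q') ∈ δ`, and
the new assignment is obtained by removing `d` from every history and adding `d` to the
histories indexed by `X`. -/
def Step (B : NRHRA Q S m) (c : Q × (Fin m → Set D)) (x : S × D) (c' : Q × (Fin m → Set D)) :
    Prop :=
  ∃ X : Set (Fin m), (c.1, x.1, ({i | x.2 ∈ c.2 i}, X), c'.1) ∈ B.δ ∧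
    ∀ i, c'.2 i = {d | (d ∈ c.2 i ∧ d ≠ x.2) ∨ (d = x.2 ∧ i ∈ X)}

inductive Run (B : NRHRA Q S m) :
    (Q × (Fin m → Set D)) → List (S × D) → (Q × (Fin m → Set D)) → Prop
  | nil (c) : Run B c [] c
  | cons {c x c' w c''} : B.Step c x c' → Run B c' w c'' → Run B c (x :: w) c''

/-- Acceptance is by final state, starting with the initially empty assignment. -/
def Accepts (B : NRHRA Q S m) (w : List (S × D)) : Prop :=
  ∃ q H, B.Run ((B.init, fun _ => (∅ : Set D))) w (q, H) ∧ q ∈ B.F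

def Lang (B : NRHRA Q S m) (D : Type) : Set (List (S × D)) := {w | B.Accepts w}

end NRHRA

/-!
The NRHRA simulates the weak CMA with the same control states, keeping its history assignment
equal to `i ↦ {d | f d = some i}` for the CMA's class memory `f`. Then `H⁻¹(d)` is `{f d}` or `∅`,
so the NRHRA can read `f d` off it, and putting `d` into place `q'` alone is exactly
`f[d ↦ q']`. In a weak CMA every state is locally accepting, so acceptance depends only on the
final control state, which both automata share.
-/

namespace CMA

theorem Weak.accepts_iff {Q S D : Type} [DecidableEq D] {A : CMA Q S D} (hA : A.Weak)
    (w : List (S × D)) : A.Accepts w ↔ ∃ c, A.Run A.initConfig w c ∧ c.1 ∈ A.FG :=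
  ⟨fun ⟨q, f, hrun, hq, _⟩ => ⟨(q, f), hrun, hq⟩,
    fun ⟨⟨q, f⟩, hrun, hq⟩ => ⟨q, f, hrun, hq, fun _ s _ => Set.eq_univ_iff_forall.mp hA s⟩⟩

variable {S D : Type} {m : ℕ}

def history (f : D → Option (Fin m)) (i : Fin m) : Set D := {d | f d = some i}

theorem history_none : history (fun _ : D => (none : Option (Fin m))) = fun _ => ∅ := by
  funext i
  simp [history]

def toNRHRA (A : CMA (Fin m) S D) : NRHRA (Fin m) S m where
  δ := {(q, a, (P, X), q') | ∃ o : Option (Fin m), P = {i | o = some i} ∧ X = {q'} ∧ q' ∈ A.δ q a o}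
  init := A.init
  F := A.FG

variable [DecidableEq D]

theorem history_update (f : D → Option (Fin m)) (d : D) (q : Fin m) (i : Fin m) :
    history (Function.update f d (some q)) i =
      {e | (e ∈ history f i ∧ e ≠ d) ∨ (e = d ∧ i ∈ ({q} : Set (Fin m)))} := by
  ext e
  by_cases he : e = d
  · subst he
    simp [history, eq_comm]
  · simp [history, he]

theorem toNRHRA_step_iff (A : CMA (Fin m) S D) (q : Fin m) (f : D → Option (Fin m)) (x : S × D)
    (c' : Fin m × (Fin m → Set D)) :
    A.toNRHRA.Step (q, history f) x c' ↔ ∃ c, A.Step (q, f) x c ∧ c' = (c.1, history c.2) := by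
  constructor
  · rintro ⟨X, ⟨o, hP, rfl, hq'⟩, hH'⟩
    have ho : f x.2 = o := Option.ext fun i => Set.ext_iff.mp hP i
    have hq : c'.1 ∈ A.δ q x.1 (f x.2) := ho ▸ hq'
    refine ⟨(c'.1, Function.update f x.2 (some c'.1)), ⟨hq, rfl⟩, Prod.ext rfl ?_⟩
    funext i
    exact (hH' i).trans (history_update f x.2 c'.1 i).symm
  · rintro ⟨c, ⟨hq, hf⟩, rfl⟩
    refine ⟨{c.1}, ⟨f x.2, rfl, rfl, hq⟩, fun i => ?_⟩
    rw [hf]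
    exact history_update f x.2 c.1 i

theorem toNRHRA_run_iff (A : CMA (Fin m) S D) (w : List (S × D)) (q : Fin m)
    (f : D → Option (Fin m)) (c' : Fin m × (Fin m → Set D)) :
    A.toNRHRA.Run (q, history f) w c' ↔ ∃ c, A.Run (q, f) w c ∧ c' = (c.1, history c.2) := by
  induction w generalizing q f with
  | nil =>
    constructor
    · rintro ⟨⟩
      exact ⟨(q, f), .nil _, rfl⟩
    · rintro ⟨c, ⟨⟩, rfl⟩
      exact .nil _
  | cons x w ih =>
    constructor
    · rintro (_ | ⟨hstep, hrun⟩)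
      obtain ⟨⟨q₁, f₁⟩, hstep', rfl⟩ := (toNRHRA_step_iff A q f x _).mp hstep
      obtain ⟨c, hrun', rfl⟩ := (ih q₁ f₁).mp hrun
      exact ⟨c, .cons hstep' hrun', rfl⟩
    · rintro ⟨c, (_ | ⟨hstep, hrun⟩), rfl⟩
      exact .cons ((toNRHRA_step_iff A q f x _).mpr ⟨_, hstep, rfl⟩) ((ih _ _).mpr ⟨c, hrun, rfl⟩)

theorem toNRHRA_accepts_iff (A : CMA (Fin m) S D) (w : List (S × D)) :
    A.toNRHRA.Accepts w ↔ ∃ c, A.Run A.initConfig w c ∧ c.1 ∈ A.FG := by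
  constructor
  · rintro ⟨q, H, hrun, hq⟩
    rw [← history_none] at hrun
    obtain ⟨c, hrun', hc⟩ := (toNRHRA_run_iff A w _ _ _).mp hrun
    cases hc
    exact ⟨c, hrun', hq⟩
  · rintro ⟨c, hrun, hq⟩
    refine ⟨c.1, history c.2, ?_, hq⟩
    rw [← history_none]
    exact (toNRHRA_run_iff A w _ _ _).mpr ⟨c, hrun, rfl⟩

end CMA

theorem wcma_to_nrhra_general (S D : Type) [DecidableEq D]
    (m : ℕ) (A : CMA (Fin m) S D) (hA : A.Weak) :
    ∃ (k : ℕ) (B : NRHRA (Fin k) S m), B.Lang D = A.Lang :=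
  ⟨m, A.toNRHRA, Set.ext fun w => (A.toNRHRA_accepts_iff w).trans (hA.accepts_iff w).symm⟩

/-- Every data language recognized by a weak class memory automaton with
state set `[m]` is recognized by a non-reset history register automaton of type `m`
(place `i` storing the data values last seen in state `i`). -/
theorem wcma_to_nrhra (S D : Type) [DecidableEq D] [Finite S] [Infinite D]
    (m : ℕ) (A : CMA (Fin m) S D) (hA : A.Weak) :
    ∃ (k : ℕ) (B : NRHRA (Fin k) S m), B.Lang D = A.Lang :=
  wcma_to_nrhra_general S D m A hA
end
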